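/- arXiv:1206.2102 — 5 statements merged into one kernel-verified Lean document; each statement's English description precedes it below -/
import Mathlib

section
/- Let K be an algebraically closed field containing F, complete with respect to a valuation v extending v_p. (i) If z ∈ K satisfies 0 < v(z) < 1/((q−1)·e), then v(z^q + π·z) = q·v(z). (ii) If w ∈ K satisfies 0 < v(w) < q/((q−1)·e), then every root z ∈ K of the polynomial X^q + π·X − w satisfies v(z) = v(w)/q. Consequently, for all real numbers 0 < s ≤ r < 1/((q−1)·e), the image of the annulus {z ∈ K : s ≤ v(z) ≤ r} under the map z ↦ z^q + π·z is exactly the annulus {w ∈ K : q·s ≤ v(w) ≤ q·r}. -/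
/-!
If `v z < c := 1/((q-1)e)`, the two terms of `z^q + π z` have distinct valuations
`q v(z) < v(z) + 1/e`, so the ultrametric inequality is an equality and `v(z^q + π z) = q v(z)`.
If `v z ≥ c`, both terms have valuation at least `q c`, hence so does their sum. So a root `z` of
`X^q + π X - w` with `v w < q c` must have `v z < c`, which gives (ii); and (iii) follows
because `z ↦ z^q + π z` is surjective on the algebraically closed field `K`.
-/

open Polynomial

namespace EReal

theorem exists_eq_coe_of_add_eq_zero {x y : EReal} (h : x + y = 0) : ∃ a : ℝ, x = a := by
  induction x <;> induction y <;> simp_all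

theorem strictMono_nsmul {n : ℕ} (hn : n ≠ 0) : StrictMono (n • · : EReal → EReal) := by
  have hn' : (0 : ℝ) < n := by positivity
  intro x y hxy
  induction x <;> induction y <;>
    simp_all [nsmul_eq_mul, ← EReal.coe_natCast, ← coe_mul, coe_mul_bot_of_pos hn',
      coe_mul_top_of_pos hn']

end EReal

theorem surjective_pow_add_mul {K : Type*} [Field K] [IsAlgClosed K] {q : ℕ} (hq : 1 < q)
    (π : K) : Function.Surjective fun z : K ↦ z ^ q + π * z := by
  have hdeg : (X ^ q + C π * X : K[X]).natDegree = q := by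
    rw [natDegree_add_eq_left_of_degree_lt] <;> simp only [natDegree_X_pow, degree_X_pow]
    exact (degree_C_mul_X_le π).trans_lt (by exact_mod_cast hq)
  intro w
  obtain ⟨z, hz⟩ := IsAlgClosed.eval_surjective (p := X ^ q + C π * X) (by omega) w
  exact ⟨z, by simpa using hz⟩

structure IsERealValuation {K : Type*} [Field K] (v : K → EReal) : Prop where
  map_zero : v 0 = ⊤
  map_one : v 1 = 0
  map_mul : ∀ x y, v (x * y) = v x + v y
  min_le_map_add : ∀ x y, min (v x) (v y) ≤ v (x + y)

namespace IsERealValuation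

variable {K : Type*} [Field K] {v : K → EReal}

theorem exists_eq_coe (hv : IsERealValuation v) {x : K} (hx : x ≠ 0) : ∃ a : ℝ, v x = a :=
  EReal.exists_eq_coe_of_add_eq_zero (y := v x⁻¹) <| by
    rw [← hv.map_mul, mul_inv_cancel₀ hx, hv.map_one]

theorem map_neg (hv : IsERealValuation v) (x : K) : v (-x) = v x := by
  obtain ⟨a, ha⟩ := hv.exists_eq_coe (neg_ne_zero.2 (one_ne_zero (α := K)))
  have ha0 : a = 0 := by
    have h := hv.map_mul (-1) (-1)
    rw [neg_mul_neg, one_mul, hv.map_one, ha, ← EReal.coe_add, eq_comm, EReal.coe_eq_zero] at h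
    linarith
  rw [← neg_one_mul, hv.map_mul, ha, ha0, EReal.coe_zero, zero_add]

theorem map_add_eq_of_lt (hv : IsERealValuation v) {x y : K} (h : v x < v y) :
    v (x + y) = v x := by
  refine le_antisymm ?_ ((le_min le_rfl h.le).trans (hv.min_le_map_add x y))
  by_contra! hlt
  have hx := hv.min_le_map_add (x + y) (-y)
  rw [add_neg_cancel_right, hv.map_neg] at hx
  exact hx.not_gt (lt_min hlt h)

theorem map_pow (hv : IsERealValuation v) (x : K) : ∀ n : ℕ, v (x ^ n) = n • v x
  | 0 => by rw [pow_zero, hv.map_one, zero_nsmul]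
  | n + 1 => by rw [pow_succ, hv.map_mul, hv.map_pow x n, succ_nsmul]

section PowAddMul

variable {q : ℕ} {π : K} {c : ℝ}

theorem map_pow_add_mul_of_lt (hv : IsERealValuation v) (hq : 1 < q)
    (hπ : v π = (((q : ℝ) - 1) * c : ℝ)) {z : K} (hz : v z < c) :
    v (z ^ q + π * z) = q • v z := by
  have hz0 : z ≠ 0 := by
    rintro rfl
    exact not_top_lt (hv.map_zero ▸ hz)
  obtain ⟨a, ha⟩ := hv.exists_eq_coe hz0
  have hac : a < c := by rwa [ha, EReal.coe_lt_coe_iff] at hz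
  have hq' : (0 : ℝ) < q - 1 := by
    rw [sub_pos]
    exact_mod_cast hq
  have hlt : v (z ^ q) < v (π * z) := by
    rw [hv.map_pow, hv.map_mul, hπ, ha, ← EReal.coe_nsmul, ← EReal.coe_add,
      EReal.coe_lt_coe_iff, nsmul_eq_mul]
    nlinarith [mul_lt_mul_of_pos_left hac hq']
  rw [hv.map_add_eq_of_lt hlt, hv.map_pow]

theorem nsmul_le_map_pow_add_mul (hv : IsERealValuation v) (hq : q ≠ 0)
    (hπ : v π = (((q : ℝ) - 1) * c : ℝ)) {z : K} (hz : c ≤ v z) :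
    q • (c : EReal) ≤ v (z ^ q + π * z) := by
  refine (le_min ?_ ?_).trans (hv.min_le_map_add _ _)
  · rw [hv.map_pow]
    exact (EReal.strictMono_nsmul hq).monotone hz
  · calc q • (c : EReal) = (((q : ℝ) - 1) * c : ℝ) + c := by
          rw [← EReal.coe_nsmul, ← EReal.coe_add, nsmul_eq_mul]
          ring_nf
      _ ≤ v π + v z := by
          rw [hπ]
          exact add_le_add_right hz _
      _ = v (π * z) := (hv.map_mul _ _).symm

theorem map_pow_add_mul_of_lt_nsmul (hv : IsERealValuation v) (hq : 1 < q)
    (hπ : v π = (((q : ℝ) - 1) * c : ℝ)) {z : K}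
    (h : v (z ^ q + π * z) < q • (c : EReal)) :
    v (z ^ q + π * z) = q • v z :=
  hv.map_pow_add_mul_of_lt hq hπ <|
    lt_of_not_ge fun hz ↦ h.not_ge (hv.nsmul_le_map_pow_add_mul (by omega) hπ hz)

theorem image_pow_add_mul_annulus [IsAlgClosed K] (hv : IsERealValuation v) (hq : 1 < q)
    (hπ : v π = (((q : ℝ) - 1) * c : ℝ)) {s r : ℝ} (hr : r < c) :
    (fun z : K ↦ z ^ q + π * z) '' {z | s ≤ v z ∧ v z ≤ r} =
      {w | q • (s : EReal) ≤ v w ∧ v w ≤ q • (r : EReal)} := by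
  have hmono := EReal.strictMono_nsmul (n := q) (by omega)
  ext w
  constructor
  · rintro ⟨z, ⟨hsz, hzr⟩, rfl⟩
    have hzc : v z < c := hzr.trans_lt (EReal.coe_lt_coe_iff.2 hr)
    rw [Set.mem_ofPred_eq, hv.map_pow_add_mul_of_lt hq hπ hzc]
    exact ⟨hmono.monotone hsz, hmono.monotone hzr⟩
  · rintro ⟨hsw, hwr⟩
    obtain ⟨z, rfl⟩ := surjective_pow_add_mul hq π w
    have hzq := hv.map_pow_add_mul_of_lt_nsmul hq hπ
      (hwr.trans_lt (hmono (EReal.coe_lt_coe_iff.2 hr)))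
    rw [hzq] at hsw hwr
    exact ⟨z, ⟨hmono.le_iff_le.1 hsw, hmono.le_iff_le.1 hwr⟩, rfl⟩

end PowAddMul

end IsERealValuation

theorem stmt_0_general
    (K : Type*) [Field K] [IsAlgClosed K]
    (v : K → EReal)
    (hv0 : v 0 = ⊤) (hv1 : v 1 = 0)
    (hvmul : ∀ x y : K, v (x * y) = v x + v y)
    (hvadd : ∀ x y : K, min (v x) (v y) ≤ v (x + y))
    (π : K) (q e : ℕ) (hq : 2 ≤ q)
    (hπ : v π = ((1 / (e : ℝ) : ℝ) : EReal)) :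
    (∀ z : K, 0 < v z → v z < ((1 / (((q : ℝ) - 1) * (e : ℝ)) : ℝ) : EReal) →
        v (z ^ q + π * z) = q • v z) ∧
    (∀ w : K, 0 < v w → v w < (((q : ℝ) / (((q : ℝ) - 1) * (e : ℝ)) : ℝ) : EReal) →
        ∀ z : K, z ^ q + π * z = w → q • v z = v w) ∧
    (∀ s r : ℝ, 0 < s → s ≤ r → r < 1 / (((q : ℝ) - 1) * (e : ℝ)) →
        (fun z : K => z ^ q + π * z) '' {z : K | (s : EReal) ≤ v z ∧ v z ≤ (r : EReal)} =
          {w : K | (((q : ℝ) * s : ℝ) : EReal) ≤ v w ∧ v w ≤ (((q : ℝ) * r : ℝ) : EReal)}) := by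
  have hv : IsERealValuation v := ⟨hv0, hv1, hvmul, hvadd⟩
  have hq1 : (q : ℝ) - 1 ≠ 0 := by
    rw [sub_ne_zero]
    exact_mod_cast (by omega : q ≠ 1)
  have hπc : v π = (((q : ℝ) - 1) * (1 / (((q : ℝ) - 1) * e)) : ℝ) := by
    rw [hπ, one_div, one_div, mul_inv, ← mul_assoc, mul_inv_cancel₀ hq1, one_mul]
  have hcoe (t : ℝ) : (((q : ℝ) * t : ℝ) : EReal) = q • (t : EReal) := by
    rw [← EReal.coe_nsmul, nsmul_eq_mul]
  refine ⟨fun z _ hz ↦ hv.map_pow_add_mul_of_lt hq hπc hz, fun w _ hw z hzw ↦ ?_,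
    fun s r _ _ hr ↦ ?_⟩
  · subst hzw
    rw [← mul_one_div, hcoe] at hw
    exact (hv.map_pow_add_mul_of_lt_nsmul hq hπc hw).symm
  · simp only [hcoe]
    exact hv.image_pow_add_mul_annulus hq hπc hr

/-- Let `K` be an algebraically closed field (containing `F`), equipped with an
(additive, `EReal`-valued) valuation `v` extending `v_p` (so that `v π = 1/e`, where `e` is the
absolute ramification index and `q ≥ 2` is the residue cardinality).
(i) If `0 < v z < 1/((q-1)e)` then `v (z^q + π z) = q • v z`.
(ii) If `0 < v w < q/((q-1)e)` then every root `z` of `X^q + π X - w` satisfies `q • v z = v w`.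
(iii) Consequently, for `0 < s ≤ r < 1/((q-1)e)`, the image of the annulus
`{z | s ≤ v z ≤ r}` under `z ↦ z^q + π z` is exactly the annulus `{w | q s ≤ v w ≤ q r}`. -/
theorem stmt_0
    (K : Type*) [Field K] [IsAlgClosed K]
    (v : K → EReal)
    (hv0 : v 0 = ⊤) (hv1 : v 1 = 0)
    (hvmul : ∀ x y : K, v (x * y) = v x + v y)
    (hvadd : ∀ x y : K, min (v x) (v y) ≤ v (x + y))
    (π : K) (q e : ℕ) (hq : 2 ≤ q) (he : 0 < e)
    (hπ : v π = ((1 / (e : ℝ) : ℝ) : EReal)) :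
    (∀ z : K, 0 < v z → v z < ((1 / (((q : ℝ) - 1) * (e : ℝ)) : ℝ) : EReal) →
        v (z ^ q + π * z) = q • v z) ∧
    (∀ w : K, 0 < v w → v w < (((q : ℝ) / (((q : ℝ) - 1) * (e : ℝ)) : ℝ) : EReal) →
        ∀ z : K, z ^ q + π * z = w → q • v z = v w) ∧
    (∀ s r : ℝ, 0 < s → s ≤ r → r < 1 / (((q : ℝ) - 1) * (e : ℝ)) →
        (fun z : K => z ^ q + π * z) '' {z : K | (s : EReal) ≤ v z ∧ v z ≤ (r : EReal)} =
          {w : K | (((q : ℝ) * s : ℝ) : EReal) ≤ v w ∧ v w ≤ (((q : ℝ) * r : ℝ) : EReal)}) :=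
  stmt_0_general K v hv0 hv1 hvmul hvadd π q e hq hπ
end

section
/- Let E be a field, let q ≥ 2 be an integer, let π, c ∈ E, and let A := E[X]/(X^q + π·X − c), a free E-algebra of rank q, with u the image of X. Then the E-algebra trace Tr_{A/E} satisfies: Tr_{A/E}(1) = q·1, Tr_{A/E}(u^i) = 0 for every i with 1 ≤ i ≤ q−2, and Tr_{A/E}(u^{q−1}) = (1−q)·π. If moreover c ≠ 0, then u is invertible in A and Tr_{A/E}(u^{−1}) = π/c. -/
/-!
Let `u` generate a power basis `1, u, …, u^(q-1)` with `u^q = c - π u`. The trace of `u^k` is the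
sum of the diagonal coefficients `[u^j] u^(k+j)`. For `k + j < q` this is `1` exactly when `k = 0`;
otherwise `u^(k+j) = c u^(k+j-q) - π u^(k+j-q+1)` contributes `-π` exactly when `k = q - 1`
and `j ≠ 0`. Finally `u⁻¹ = c⁻¹ (u^(q-1) + π)`.
-/

open Polynomial

namespace PowerBasis

section CommRing

variable {R S : Type*} [CommRing R] [CommRing S] [Algebra R S] (pb : PowerBasis R S)

theorem trace_gen_pow (k : ℕ) :
    Algebra.trace R S (pb.gen ^ k) = ∑ j : Fin pb.dim, pb.basis.repr (pb.gen ^ (k + j)) j := by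
  rw [Algebra.trace_eq_matrix_trace pb.basis, Matrix.trace]
  refine Finset.sum_congr rfl fun j _ => ?_
  rw [Matrix.diag_apply, Algebra.leftMulMatrix_eq_repr_mul, pb.basis_eq_pow, pow_add]

theorem basis_repr_gen_pow_of_lt {m : ℕ} (hm : m < pb.dim) (j : Fin pb.dim) :
    pb.basis.repr (pb.gen ^ m) j = if m = j then 1 else 0 := by
  rw [← pb.basis_eq_pow ⟨m, hm⟩, Module.Basis.repr_self, Finsupp.single_apply]
  simp only [Fin.ext_iff]

variable {π c : R}

theorem basis_repr_gen_pow_of_dim_le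
    (hgen : pb.gen ^ pb.dim = algebraMap R S c - algebraMap R S π * pb.gen) {m : ℕ}
    (hm : pb.dim ≤ m) (hm' : m + 2 ≤ 2 * pb.dim) (j : Fin pb.dim) :
    pb.basis.repr (pb.gen ^ m) j =
      (if m - pb.dim = j then c else 0) - (if m - pb.dim + 1 = j then π else 0) := by
  have hsplit : pb.gen ^ m = c • pb.gen ^ (m - pb.dim) - π • pb.gen ^ (m - pb.dim + 1) := by
    rw [← Nat.add_sub_cancel' hm, pow_add, hgen, Nat.add_sub_cancel_left, Algebra.smul_def,
      Algebra.smul_def]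
    ring
  rw [hsplit, map_sub, map_smul, map_smul, Finsupp.sub_apply, Finsupp.smul_apply,
    Finsupp.smul_apply, pb.basis_repr_gen_pow_of_lt (by omega),
    pb.basis_repr_gen_pow_of_lt (by omega)]
  simp only [smul_eq_mul, mul_ite, mul_one, mul_zero]

theorem trace_algebraMap (x : R) : Algebra.trace R S (algebraMap R S x) = pb.dim * x := by
  rw [Algebra.trace_algebraMap_of_basis pb.basis, Fintype.card_fin, nsmul_eq_mul]

theorem trace_gen_pow_eq_zero
    (hgen : pb.gen ^ pb.dim = algebraMap R S c - algebraMap R S π * pb.gen) {k : ℕ}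
    (hk : 1 ≤ k) (hk' : k + 2 ≤ pb.dim) : Algebra.trace R S (pb.gen ^ k) = 0 := by
  rw [trace_gen_pow]
  refine Finset.sum_eq_zero fun j _ => ?_
  rcases lt_or_ge (k + j) pb.dim with hlt | hge
  · rw [pb.basis_repr_gen_pow_of_lt hlt, if_neg (by omega)]
  · rw [pb.basis_repr_gen_pow_of_dim_le hgen hge (by omega), if_neg (by omega),
      if_neg (by omega), sub_zero]

theorem trace_gen_pow_dim_sub_one
    (hgen : pb.gen ^ pb.dim = algebraMap R S c - algebraMap R S π * pb.gen)
    (hdim : 2 ≤ pb.dim) : Algebra.trace R S (pb.gen ^ (pb.dim - 1)) = (1 - pb.dim) * π := by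
  have : NeZero pb.dim := ⟨by omega⟩
  have hterm (j : Fin pb.dim) :
      pb.basis.repr (pb.gen ^ (pb.dim - 1 + j)) j = (if j = 0 then π else 0) - π := by
    by_cases hj : (j : ℕ) = 0
    · rw [hj, add_zero, pb.basis_repr_gen_pow_of_lt (by omega), if_neg (by omega),
        if_pos (Fin.val_eq_zero_iff.mp hj), sub_self]
    · rw [pb.basis_repr_gen_pow_of_dim_le hgen (by omega) (by omega), if_neg (by omega),
        if_pos (by omega), if_neg (Fin.val_ne_zero_iff.mp hj), zero_sub]
  rw [trace_gen_pow, Finset.sum_congr rfl fun j _ => hterm j, Finset.sum_sub_distrib,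
    Finset.sum_ite_eq', if_pos (Finset.mem_univ _), Finset.sum_const, Finset.card_univ,
    Fintype.card_fin, nsmul_eq_mul]
  ring

theorem gen_mul_eq_one
    (hgen : pb.gen ^ pb.dim = algebraMap R S c - algebraMap R S π * pb.gen)
    (hdim : 1 ≤ pb.dim) {c' : R} (hc : c * c' = 1) :
    pb.gen * (c' • (pb.gen ^ (pb.dim - 1) + algebraMap R S π)) = 1 := by
  rw [mul_smul_comm, mul_add, ← pow_succ', Nat.sub_add_cancel hdim, hgen, mul_comm pb.gen,
    sub_add_cancel, Algebra.smul_def, ← map_mul, mul_comm, hc, map_one]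

end CommRing

section Field

variable {K S : Type*} [Field K] [CommRing S] [Algebra K S] (pb : PowerBasis K S) {π c : K}

theorem trace_inverse_gen
    (hgen : pb.gen ^ pb.dim = algebraMap K S c - algebraMap K S π * pb.gen)
    (hdim : 2 ≤ pb.dim) (hc : c ≠ 0) :
    IsUnit pb.gen ∧ Algebra.trace K S (Ring.inverse pb.gen) = π / c := by
  have hmul := pb.gen_mul_eq_one hgen (by omega) (mul_inv_cancel₀ hc)
  have hunit : IsUnit pb.gen := .of_mul_eq_one _ hmul
  have hinv : Ring.inverse pb.gen = c⁻¹ • (pb.gen ^ (pb.dim - 1) + algebraMap K S π) := by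
    rw [← Ring.inverse_mul_cancel_left _ (c⁻¹ • _) hunit, hmul, mul_one]
  refine ⟨hunit, ?_⟩
  rw [hinv, map_smul, map_add, pb.trace_gen_pow_dim_sub_one hgen hdim, trace_algebraMap,
    smul_eq_mul]
  field_simp
  ring

end Field

end PowerBasis

namespace Polynomial

variable {R : Type*} [CommRing R] {q : ℕ}

theorem degree_C_mul_X_sub_C_lt (π c : R) (hq : 2 ≤ q) :
    (C π * X - C c).degree < (q : WithBot ℕ) := by
  have : (C π * X - C c).degree ≤ 1 := by compute_degree
  exact this.trans_lt (by exact_mod_cast (by omega : 1 < q))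

theorem monic_X_pow_add_C_mul_X_sub_C (π c : R) (hq : 2 ≤ q) :
    (X ^ q + C π * X - C c).Monic := by
  rw [add_sub_assoc]
  exact monic_X_pow_add (degree_C_mul_X_sub_C_lt π c hq)

theorem natDegree_X_pow_add_C_mul_X_sub_C [Nontrivial R] (π c : R) (hq : 2 ≤ q) :
    (X ^ q + C π * X - C c).natDegree = q := by
  rw [add_sub_assoc, natDegree_add_eq_left_of_degree_lt, natDegree_X_pow]
  rw [degree_X_pow]
  exact degree_C_mul_X_sub_C_lt π c hq

end Polynomial

theorem AdjoinRoot.root_pow_X_pow_add_C_mul_X_sub_C {R : Type*} [CommRing R] (q : ℕ) (π c : R) :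
    root (X ^ q + C π * X - C c) ^ q =
      of (X ^ q + C π * X - C c) c -
        of (X ^ q + C π * X - C c) π * root (X ^ q + C π * X - C c) := by
  have h := eval₂_root (X ^ q + C π * X - C c)
  simp only [eval₂_sub, eval₂_add, eval₂_mul, eval₂_X_pow, eval₂_C, eval₂_X] at h
  linear_combination h

/-- Let `E` be a field, `q ≥ 2`, `π c ∈ E`, and `A := E[X]/(X^q + π X - c)`
(a free `E`-algebra of rank `q`), with `u` the image of `X`.  Then `Tr_{A/E}(1) = q`,
`Tr_{A/E}(u^i) = 0` for `1 ≤ i ≤ q-2`, and `Tr_{A/E}(u^{q-1}) = (1-q)π`.  If moreover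
`c ≠ 0`, then `u` is invertible in `A` and `Tr_{A/E}(u⁻¹) = π/c`. -/
theorem stmt_2
    (E : Type*) [Field E] (q : ℕ) (hq : 2 ≤ q) (π c : E)
    (f : Polynomial E)
    (hf : f = Polynomial.X ^ q + Polynomial.C π * Polynomial.X - Polynomial.C c) :
    Algebra.trace E (AdjoinRoot f) 1 = (q : E) ∧
    (∀ i : ℕ, 1 ≤ i → i ≤ q - 2 →
      Algebra.trace E (AdjoinRoot f) (AdjoinRoot.root f ^ i) = 0) ∧
    Algebra.trace E (AdjoinRoot f) (AdjoinRoot.root f ^ (q - 1)) = (1 - (q : E)) * π ∧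
    (c ≠ 0 → IsUnit (AdjoinRoot.root f) ∧
      Algebra.trace E (AdjoinRoot f) (Ring.inverse (AdjoinRoot.root f)) = π / c) := by
  subst hf
  set pb := AdjoinRoot.powerBasis' (monic_X_pow_add_C_mul_X_sub_C π c hq)
  have hdim : pb.dim = q := natDegree_X_pow_add_C_mul_X_sub_C π c hq
  have hgen : pb.gen ^ pb.dim = algebraMap E _ c - algebraMap E _ π * pb.gen := by
    rw [hdim]
    exact AdjoinRoot.root_pow_X_pow_add_C_mul_X_sub_C q π c
  refine ⟨?_, fun i hi hi' => pb.trace_gen_pow_eq_zero hgen hi (by omega), ?_,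
    fun hc => pb.trace_inverse_gen hgen (by omega) hc⟩
  · rw [← map_one (algebraMap E _), pb.trace_algebraMap, hdim, mul_one]
  · have htop := pb.trace_gen_pow_dim_sub_one hgen (by omega)
    rwa [hdim] at htop
end

section
/- For every integer ℓ ≥ 0, the element q^{−1}·Tr(u^ℓ) is a polynomial in w of degree at most ⌊ℓ/q⌋; that is, q^{−1}·Tr(u^ℓ) = ∑_{i=0}^{⌊ℓ/q⌋} a_{ℓ,i}·w^i with a_{ℓ,i} ∈ L, and moreover v_π(a_{ℓ,i}) ≥ ⌊ℓ/q⌋ + 1 − i − v_π(q) for every i. (Equivalently: for the special Lubin–Tate group, the operator ψ = q^{−1}·φ_q^{−1}∘Tr satisfies ψ(u^ℓ) = ∑_{i=0}^{⌊ℓ/q⌋} a_{ℓ,i}·u^i with these bounds.) -/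
/-!
Over `E = L(w)` the powers `1, u, …, u^(q-1)` form a basis of `L(u)`: the degree `[L(u) : L(w)]`
is the degree `q` of the polynomial `w`, and `u` satisfies `u^q = w - π u`. Reading off the
diagonal of multiplication by `u^ℓ` in this basis gives, for `ℓ < q`, `Tr(u^ℓ) = q, 0, …, 0,
-(q-1)π`, and multiplying the relation by `u^ℓ` gives `Tr(u^(ℓ+q)) = w Tr(u^ℓ) - π Tr(u^(ℓ+1))`.
By induction `Tr(u^ℓ) = P_ℓ(w)` with `deg P_ℓ ≤ ⌊ℓ/q⌋` and `v(coeff_i P_ℓ) ≥ ⌊ℓ/q⌋ + 1 - i`: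
the term `w P_(ℓ-q)` raises degree and bound by one, and the term `π P_(ℓ-q+1)` gains one from
`v(π) = 1`. Dividing by `q` costs `v(q)`.
-/

open Polynomial Module

namespace Algebra

variable {K A : Type*} [CommRing K] [CommRing A] [Algebra K A]

theorem trace_pow_add_of_pow_eq {x : A} {n : ℕ} {c d : K}
    (hx : x ^ n = algebraMap K A c - algebraMap K A d * x) (ℓ : ℕ) :
    trace K A (x ^ (ℓ + n)) = c * trace K A (x ^ ℓ) - d * trace K A (x ^ (ℓ + 1)) := by
  have hsplit : x ^ (ℓ + n) = c • x ^ ℓ - d • x ^ (ℓ + 1) := by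
    rw [pow_add, hx, Algebra.smul_def, Algebra.smul_def]
    ring
  rw [hsplit, map_sub, map_smul, map_smul, smul_eq_mul, smul_eq_mul]

end Algebra

namespace PowerBasis

variable {K A : Type*} [CommRing K] [CommRing A] [Algebra K A] (pb : PowerBasis K A)

theorem repr_gen_pow_of_lt {k : ℕ} (hk : k < pb.dim) :
    pb.basis.repr (pb.gen ^ k) = Finsupp.single ⟨k, hk⟩ 1 := by
  rw [← pb.basis_eq_pow ⟨k, hk⟩, pb.basis.repr_self]

variable {pb} {c d : K}
  (hgen : pb.gen ^ pb.dim = algebraMap K A c - algebraMap K A d * pb.gen)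
include hgen

theorem repr_gen_pow_add_self {ℓ : ℕ} (hℓ : ℓ < pb.dim) (j : Fin pb.dim) :
    pb.basis.repr (pb.gen ^ (ℓ + j)) j =
      if ℓ = 0 then 1 else if ℓ + 1 = pb.dim ∧ (j : ℕ) ≠ 0 then -d else 0 := by
  have hj := j.isLt
  rcases lt_or_ge (ℓ + j) pb.dim with hlt | hge
  · rw [repr_gen_pow_of_lt pb hlt]
    simp only [Finsupp.single_apply, Fin.ext_iff]
    split_ifs <;> first | omega | simp
  · obtain ⟨m, hm⟩ := Nat.exists_eq_add_of_le' hge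
    have hsplit : pb.gen ^ (ℓ + j) = c • pb.gen ^ m - d • pb.gen ^ (m + 1) := by
      rw [hm, pow_add, hgen, Algebra.smul_def, Algebra.smul_def]
      ring
    rw [hsplit, map_sub, map_smul, map_smul, repr_gen_pow_of_lt pb (by omega : m < pb.dim),
      repr_gen_pow_of_lt pb (by omega : m + 1 < pb.dim)]
    simp only [Finsupp.coe_sub, Finsupp.coe_smul, Pi.sub_apply, Pi.smul_apply,
      Finsupp.single_apply, Fin.ext_iff, smul_eq_mul, mul_ite, mul_one, mul_zero]
    split_ifs <;> first | omega | simp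

theorem trace_gen_pow_of_lt {ℓ : ℕ} (hℓ : ℓ < pb.dim) :
    Algebra.trace K A (pb.gen ^ ℓ) =
      if ℓ = 0 then (pb.dim : K) else if ℓ + 1 = pb.dim then -(ℓ * d) else 0 := by
  have hdiag : ∀ j : Fin pb.dim, Algebra.leftMulMatrix pb.basis (pb.gen ^ ℓ) j j =
      if ℓ = 0 then 1 else if ℓ + 1 = pb.dim ∧ (j : ℕ) ≠ 0 then -d else 0 := by
    intro j
    rw [Algebra.leftMulMatrix_eq_repr_mul, pb.basis_eq_pow, ← pow_add,
      repr_gen_pow_add_self hgen hℓ]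
  rw [Algebra.trace_eq_matrix_trace pb.basis, Matrix.trace]
  simp only [Matrix.diag_apply, hdiag]
  rw [Fin.sum_univ_eq_sum_range
    (fun j => if ℓ = 0 then (1 : K) else if ℓ + 1 = pb.dim ∧ j ≠ 0 then -d else 0)]
  by_cases hℓ0 : ℓ = 0
  · simp [hℓ0]
  by_cases htop : ℓ + 1 = pb.dim
  · rw [← htop, Finset.sum_range_succ']
    simp [hℓ0, nsmul_eq_mul]
  · simp [hℓ0, htop]

end PowerBasis

section Valuation

variable {L : Type*} [Field L] {v : L → EReal}

theorem val_ne_bot (hv0 : v 0 = ⊤) (hvmul : ∀ x y : L, v (x * y) = v x + v y) (x : L) :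
    v x ≠ ⊥ := by
  intro hx
  have h := hvmul x 0
  rw [mul_zero, hx, EReal.bot_add, hv0] at h
  exact top_ne_bot h

theorem val_neg (hv1 : v 1 = 0) (hvmul : ∀ x y : L, v (x * y) = v x + v y) (x : L) :
    v (-x) = v x := by
  have hm1 : v (-1) = 0 := by
    have h := hvmul (-1) (-1)
    rw [neg_mul_neg, one_mul, hv1] at h
    induction h' : v (-1) using EReal.rec with
    | bot => rw [h', EReal.bot_add] at h; exact absurd h EReal.zero_ne_bot
    | top => rw [h', EReal.top_add_top] at h; exact absurd h EReal.zero_ne_top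
    | coe r =>
      rw [h', ← EReal.coe_add] at h
      have : r + r = 0 := by exact_mod_cast h.symm
      rw [show r = 0 by linarith, EReal.coe_zero]
  rw [← neg_one_mul, hvmul, hm1, zero_add]

theorem val_natCast_nonneg (hv0 : v 0 = ⊤) (hv1 : v 1 = 0)
    (hvadd : ∀ x y : L, min (v x) (v y) ≤ v (x + y)) (n : ℕ) : 0 ≤ v n := by
  induction n with
  | zero => simp [hv0]
  | succ n ih => rw [Nat.cast_succ]; exact (le_min ih hv1.ge).trans (hvadd n 1)

theorem sub_val_le_val_inv_mul (hv0 : v 0 = ⊤) (hvmul : ∀ x y : L, v (x * y) = v x + v y)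
    {x y : L} (hx : x ≠ 0) {B : EReal} (h : B ≤ v y) : B - v x ≤ v (x⁻¹ * y) := by
  rw [EReal.sub_le_iff_le_add (.inl (val_ne_bot hv0 hvmul x)) (.inr (val_ne_bot hv0 hvmul _)),
    ← hvmul, mul_comm, mul_inv_cancel_left₀ hx]
  exact h

end Valuation

namespace Polynomial

variable {L : Type*} [Field L]

def CoeffValBound (v : L → EReal) (m : ℕ) (P : L[X]) : Prop :=
  ∀ i : ℕ, (((m : ℝ) + 1 - i : ℝ) : EReal) ≤ v (P.coeff i)

variable {v : L → EReal} {m : ℕ} {P Q : L[X]}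

theorem coeffValBound_C (hv0 : v 0 = ⊤) {b : L} (hb : 1 ≤ v b) : CoeffValBound v 0 (C b) := by
  intro i
  rcases Nat.eq_zero_or_pos i with rfl | hi
  · simpa using hb
  · simp [coeff_C, hi.ne', hv0]

theorem CoeffValBound.mono {n : ℕ} (hP : CoeffValBound v m P) (hnm : n ≤ m) :
    CoeffValBound v n P := fun i =>
  le_trans (EReal.coe_le_coe_iff.mpr (by gcongr)) (hP i)

theorem CoeffValBound.X_mul (hv0 : v 0 = ⊤) (hP : CoeffValBound v m P) :
    CoeffValBound v (m + 1) (X * P) := by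
  rintro (_ | i)
  · simp [hv0]
  · rw [coeff_X_mul]
    convert hP i using 2
    push_cast
    ring

theorem CoeffValBound.C_mul (hvmul : ∀ x y : L, v (x * y) = v x + v y) {c : L}
    (hc : 1 ≤ v c) (hP : CoeffValBound v m P) : CoeffValBound v (m + 1) (C c * P) := by
  intro i
  rw [coeff_C_mul, hvmul]
  calc (((m + 1 : ℕ) : ℝ) + 1 - i : ℝ) = 1 + (((m : ℝ) + 1 - i : ℝ) : EReal) := by
        rw [← EReal.coe_one, ← EReal.coe_add]; congr 1; push_cast; ring
    _ ≤ v c + v (P.coeff i) := add_le_add hc (hP i)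

theorem CoeffValBound.sub (hv1 : v 1 = 0) (hvmul : ∀ x y : L, v (x * y) = v x + v y)
    (hvadd : ∀ x y : L, min (v x) (v y) ≤ v (x + y)) (hP : CoeffValBound v m P)
    (hQ : CoeffValBound v m Q) : CoeffValBound v m (P - Q) := fun i => by
  rw [coeff_sub, sub_eq_add_neg (P.coeff i)]
  exact (le_min (hP i) ((hQ i).trans_eq (val_neg hv1 hvmul _).symm)).trans (hvadd _ _)

end Polynomial

theorem exists_polynomial_of_recurrence {L A : Type*} [Field L] [CommRing A] [Algebra L A]
    {v : L → EReal} (hv0 : v 0 = ⊤) (hv1 : v 1 = 0)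
    (hvmul : ∀ x y : L, v (x * y) = v x + v y) (hvadd : ∀ x y : L, min (v x) (v y) ≤ v (x + y))
    {q : ℕ} (hq : 2 ≤ q) {π : L} (hπ : 1 ≤ v π) (w : A) {t : ℕ → A}
    (hbase : ∀ ℓ < q, ∃ b : L, 1 ≤ v b ∧ t ℓ = algebraMap L A b)
    (hrec : ∀ ℓ, t (ℓ + q) = w * t ℓ - algebraMap L A π * t (ℓ + 1)) (ℓ : ℕ) :
    ∃ P : L[X], P.natDegree ≤ ℓ / q ∧ CoeffValBound v (ℓ / q) P ∧ aeval w P = t ℓ := by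
  induction ℓ using Nat.strong_induction_on with
  | _ ℓ ih =>
  rcases lt_or_ge ℓ q with hlt | hge
  · obtain ⟨b, hb, htb⟩ := hbase ℓ hlt
    refine ⟨C b, by simp, ?_, by simp [htb]⟩
    rw [Nat.div_eq_of_lt hlt]
    exact coeffValBound_C hv0 hb
  · obtain ⟨k, rfl⟩ := Nat.exists_eq_add_of_le' hge
    have hdiv : (k + q) / q = k / q + 1 := Nat.add_div_right k (by omega)
    have hdiv_succ : (k + 1) / q ≤ k / q + 1 := by
      rw [← hdiv]; exact Nat.div_le_div_right (by omega)
    obtain ⟨P₁, hdeg₁, hval₁, heval₁⟩ := ih k (by omega)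
    obtain ⟨P₂, hdeg₂, hval₂, heval₂⟩ := ih (k + 1) (by omega)
    refine ⟨X * P₁ - C π * P₂, ?_, ?_, ?_⟩
    · rw [hdiv]
      refine (natDegree_sub_le _ _).trans (max_le ?_ ((natDegree_C_mul_le _ _).trans ?_))
      · exact (natDegree_mul_le.trans (by rw [natDegree_X]; omega))
      · omega
    · rw [hdiv]
      refine (hval₁.X_mul hv0).sub hv1 hvmul hvadd ((hval₂.C_mul hvmul hπ).mono ?_)
      exact Nat.add_le_add_right (Nat.div_le_div_right (by omega)) 1
    · rw [hrec, map_sub, map_mul, map_mul, aeval_X, aeval_C, heval₁, heval₂]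

namespace RatFunc

variable {K : Type*} [Field K]

theorem finrank_adjoin_algebraMap (p : K[X]) :
    finrank (IntermediateField.adjoin K {algebraMap K[X] (RatFunc K) p}) (RatFunc K) =
      p.natDegree := by
  rw [finrank_eq_max_natDegree, num_algebraMap, denom_algebraMap, natDegree_one, max_zero]

theorem finrank_adjoin_X_pow_add_C_mul_X {q : ℕ} (hq : 2 ≤ q) (π : K) :
    finrank (IntermediateField.adjoin K {RatFunc.X ^ q + RatFunc.C π * RatFunc.X}) (RatFunc K) =
      q := by
  have hdeg : (Polynomial.X ^ q + Polynomial.C π * Polynomial.X : K[X]).natDegree = q := by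
    rw [natDegree_add_eq_left_of_natDegree_lt] <;> rw [natDegree_X_pow]
    exact (natDegree_C_mul_le π Polynomial.X).trans_lt (by rw [natDegree_X]; omega)
  have h := finrank_adjoin_algebraMap (Polynomial.X ^ q + Polynomial.C π * Polynomial.X : K[X])
  rwa [hdeg, map_add, map_mul, map_pow, algebraMap_X, algebraMap_C] at h

noncomputable def powerBasisX (E : IntermediateField K (RatFunc K))
    [FiniteDimensional E (RatFunc K)] : PowerBasis E (RatFunc K) :=
  PowerBasis.ofAdjoinEqTop (Algebra.IsIntegral.isIntegral X) <| by
    rw [← IntermediateField.adjoin_simple_toSubalgebra_of_isAlgebraic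
      (Algebra.IsAlgebraic.isAlgebraic X), IntermediateField.adjoin_X,
      IntermediateField.top_toSubalgebra]

variable (E : IntermediateField K (RatFunc K)) [FiniteDimensional E (RatFunc K)]

@[simp]
theorem powerBasisX_gen : (powerBasisX E).gen = X := rfl

theorem powerBasisX_dim : (powerBasisX E).dim = finrank E (RatFunc K) :=
  (powerBasisX E).finrank.symm

end RatFunc

theorem exists_polynomial_trace_X_pow {L : Type*} [Field L] {v : L → EReal} (hv0 : v 0 = ⊤)
    (hv1 : v 1 = 0) (hvmul : ∀ x y : L, v (x * y) = v x + v y)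
    (hvadd : ∀ x y : L, min (v x) (v y) ≤ v (x + y))
    {q : ℕ} (hq : 2 ≤ q) {π : L} (hπ : v π = 1) (hvq : 1 ≤ v q)
    {w : RatFunc L} (hw : w = RatFunc.X ^ q + RatFunc.C π * RatFunc.X) (ℓ : ℕ) :
    ∃ P : L[X], P.natDegree ≤ ℓ / q ∧ CoeffValBound v (ℓ / q) P ∧
      aeval w P =
        Algebra.trace (IntermediateField.adjoin L {w}) (RatFunc L) (RatFunc.X ^ ℓ) := by
  have hfinrank : finrank (IntermediateField.adjoin L {w}) (RatFunc L) = q := by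
    rw [hw]; exact RatFunc.finrank_adjoin_X_pow_add_C_mul_X hq π
  set E := IntermediateField.adjoin L {w}
  have : FiniteDimensional E (RatFunc L) := Module.finite_of_finrank_pos (by omega)
  set pb := RatFunc.powerBasisX E
  have hdim : pb.dim = q := (RatFunc.powerBasisX_dim E).trans hfinrank
  set w' : E := ⟨w, IntermediateField.mem_adjoin_simple_self L w⟩
  have hrel :
      pb.gen ^ pb.dim = algebraMap E _ w' - algebraMap E _ (algebraMap L E π) * pb.gen := by
    rw [RatFunc.powerBasisX_gen, hdim, ← IsScalarTower.algebraMap_apply, RatFunc.algebraMap_eq_C]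
    change _ = w - _
    rw [hw]
    ring
  have hbase : ∀ ℓ < q, ∃ b : L, 1 ≤ v b ∧
      Algebra.trace E (RatFunc L) (RatFunc.X ^ ℓ) = algebraMap L E b := by
    intro ℓ hℓ
    have htrace := PowerBasis.trace_gen_pow_of_lt hrel (hdim ▸ hℓ)
    rw [RatFunc.powerBasisX_gen, hdim] at htrace
    refine ⟨if ℓ = 0 then (q : L) else if ℓ + 1 = q then -(ℓ * π) else 0, ?_, ?_⟩
    · split_ifs
      · exact hvq
      · rw [val_neg hv1 hvmul, hvmul, hπ]
        simpa using add_le_add_left (val_natCast_nonneg hv0 hv1 hvadd ℓ) 1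
      · simp [hv0]
    · rw [htrace]
      split_ifs <;> simp
  have hrec : ∀ ℓ, Algebra.trace E (RatFunc L) (RatFunc.X ^ (ℓ + q)) =
      w' * Algebra.trace E (RatFunc L) (RatFunc.X ^ ℓ) -
        algebraMap L E π * Algebra.trace E (RatFunc L) (RatFunc.X ^ (ℓ + 1)) := fun ℓ => by
    simpa [pb, hdim] using Algebra.trace_pow_add_of_pow_eq hrel ℓ
  obtain ⟨P, hdeg, hval, heval⟩ :=
    exists_polynomial_of_recurrence hv0 hv1 hvmul hvadd hq hπ.ge w' hbase hrec ℓ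
  refine ⟨P, hdeg, hval, ?_⟩
  rw [← heval, ← IntermediateField.coe_val, ← aeval_algHom_apply]
  rfl

/-- `L` is a finite extension of `F` (encoded: a characteristic-zero field with an
additive valuation `vπ` normalized by `vπ π = 1`, for which `vπ q ≥ 1` since `q` is the residue
cardinality of `O_F` and `π` a uniformizer).  In `L(u)` set `w := u^q + π u` and let `Tr` be the
trace of the degree-`q` extension `L(w) ⊆ L(u)`.  For every `ℓ ≥ 0`, `q⁻¹ Tr(u^ℓ)` is a
polynomial in `w` of degree at most `⌊ℓ/q⌋`: `q⁻¹ Tr(u^ℓ) = ∑_{i=0}^{⌊ℓ/q⌋} a i * w^i` with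
`vπ (a i) ≥ ⌊ℓ/q⌋ + 1 - i - vπ q` for every `i`. -/
theorem stmt_4
    (L : Type*) [Field L] [CharZero L]
    (vπ : L → EReal)
    (hv0 : vπ 0 = ⊤) (hv1 : vπ 1 = 0)
    (hvmul : ∀ x y : L, vπ (x * y) = vπ x + vπ y)
    (hvadd : ∀ x y : L, min (vπ x) (vπ y) ≤ vπ (x + y))
    (q : ℕ) (hq : 2 ≤ q) (π : L) (hπ : vπ π = 1)
    (hvq : (1 : EReal) ≤ vπ ((q : L)))
    (w : RatFunc L) (hw : w = RatFunc.X ^ q + RatFunc.C π * RatFunc.X)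
    (ℓ : ℕ) :
    ∃ a : ℕ → L,
      ((q : RatFunc L))⁻¹ *
          ((Algebra.trace (IntermediateField.adjoin L {w}) (RatFunc L)
              ((RatFunc.X : RatFunc L) ^ ℓ) : IntermediateField.adjoin L {w}) : RatFunc L)
        = ∑ i ∈ Finset.range (ℓ / q + 1), RatFunc.C (a i) * w ^ i ∧
      ∀ i ∈ Finset.range (ℓ / q + 1),
        ((((ℓ / q : ℕ) : ℝ) + 1 - (i : ℝ) : ℝ) : EReal) - vπ ((q : L)) ≤ vπ (a i) := by
  obtain ⟨P, hdeg, hval, heval⟩ :=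
    exists_polynomial_trace_X_pow hv0 hv1 hvmul hvadd hq hπ hvq hw ℓ
  have hq0 : (q : L) ≠ 0 := Nat.cast_ne_zero.mpr (by omega)
  refine ⟨fun i => (q : L)⁻¹ * P.coeff i, ?_,
    fun i _ => sub_val_le_val_inv_mul hv0 hvmul hq0 (hval i)⟩
  rw [← heval, aeval_eq_sum_range' (Nat.lt_succ_of_le hdeg), Finset.mul_sum]
  refine Finset.sum_congr rfl fun i _ => ?_
  rw [Algebra.smul_def, RatFunc.algebraMap_eq_C, map_mul, map_inv₀, map_natCast, mul_assoc]
end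

section
/- Let α ∈ L^× be an element that is not of the form π^{−i} for any natural number i. Then the map f ↦ α·φ_q(f) − f is a bijection from R^+_L to itself. -/
/-- Formal composition `f ∘ s` of power series (intended for `s` with zero constant term). -/
noncomputable def pscomp {L : Type*} [CommRing L] (f s : PowerSeries L) : PowerSeries L :=
  PowerSeries.mk fun n =>
    ∑ m ∈ Finset.range (n + 1), PowerSeries.coeff m f * PowerSeries.coeff n (s ^ m)

/-- The substitution operator `φ_q : f(u) ↦ f(u^q + π u)`. -/
noncomputable def phiqPS {L : Type*} [CommRing L] (q : ℕ) (π : L) (f : PowerSeries L) :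
    PowerSeries L :=
  pscomp f (PowerSeries.X ^ q + PowerSeries.C π * PowerSeries.X)

/-- Membership in the ring `R^+_L` of power series convergent on the open unit disc. -/
def RplusMem {L : Type*} [Field L] (v : L → EReal) (f : PowerSeries L) : Prop :=
  ∀ t : ℝ, 0 < t → ∀ M : ℝ, ∃ N : ℕ, ∀ n ≥ N,
    (M : EReal) ≤ v (PowerSeries.coeff n f) + (((n : ℝ) * t : ℝ) : EReal)

/-! The `n`-th coefficient of `α φ_q(f) - f` is `(α π^n - 1) fₙ + α ∑_{m<n} c_{m,n} f_m`, where
`c_{m,n}` is the coefficient of `u^n` in `(u^q + π u)^m`. This is a triangular system with nonzero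
diagonal, so the map is bijective on all power series, and it remains to compare the growth of
coefficients. Membership in `R^+_L` says that every Gauss valuation `inf_n (v(fₙ) + a n)`, `a > 0`,
is finite. Since `u^q + π u` has Gauss valuation `≥ a + b` at slope `a` whenever
`b ≤ min((q-1) a, v π)`, these bounds are preserved by `φ_q`. Conversely, taking
`0 < b ≤ min(t/2, v π)` and `a = t - b`, the recursion propagates `v(fₙ) ≥ β - t n` with a gain of
`b n`, which pays for the constant loss `v α` once `n` is large; for such `n` also
`v(α π^n - 1) = 0`.
-/

open PowerSeries

structure IsEValuation {L : Type*} [Field L] (v : L → EReal) : Prop where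
  map_zero : v 0 = ⊤
  map_one : v 1 = 0
  map_mul : ∀ x y, v (x * y) = v x + v y
  min_le_map_add : ∀ x y, min (v x) (v y) ≤ v (x + y)

section

variable {L : Type*} [Field L] {v : L → EReal}

namespace IsEValuation

variable (hv : IsEValuation v)
include hv

theorem ne_bot (x : L) : v x ≠ ⊥ := by
  rcases eq_or_ne x 0 with rfl | hx
  · simp [hv.map_zero]
  · intro h
    have := hv.map_mul x x⁻¹
    rw [mul_inv_cancel₀ hx, hv.map_one, h, EReal.bot_add] at this
    exact EReal.zero_ne_bot this

theorem exists_coe_le (x : L) : ∃ r : ℝ, (r : EReal) ≤ v x :=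
  ⟨(v x).toReal, EReal.coe_toReal_le (hv.ne_bot x)⟩

theorem map_neg (x : L) : v (-x) = v x := by
  have h1 : v (-1) = 0 := by
    have h2 : v (-1) + v (-1) = 0 := by rw [← hv.map_mul, neg_one_mul, neg_neg, hv.map_one]
    induction h : v (-1) using EReal.rec with
    | bot => exact absurd h (hv.ne_bot _)
    | top => simp [h] at h2
    | coe r =>
      rw [h, ← EReal.coe_add, EReal.coe_eq_zero] at h2
      rw [EReal.coe_eq_zero]; linarith
  rw [neg_eq_neg_one_mul, hv.map_mul, h1, zero_add]

theorem min_le_map_sub (x y : L) : min (v x) (v y) ≤ v (x - y) := by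
  simpa [sub_eq_add_neg, hv.map_neg] using hv.min_le_map_add x (-y)

theorem map_add_eq_of_lt {x y : L} (h : v y < v x) : v (x + y) = v y := by
  refine le_antisymm ?_ (min_eq_right h.le ▸ hv.min_le_map_add x y)
  by_contra! hc
  have := hv.min_le_map_sub (x + y) x
  rw [add_sub_cancel_left] at this
  exact this.not_gt (lt_min hc h)

theorem le_map_sum {ι : Type*} (s : Finset ι) (f : ι → L) {w : EReal}
    (h : ∀ i ∈ s, w ≤ v (f i)) : w ≤ v (∑ i ∈ s, f i) := by
  classical
  induction s using Finset.induction_on with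
  | empty => simp [hv.map_zero]
  | insert a s ha ih =>
    rw [Finset.sum_insert ha]
    exact (le_min (h a (by simp)) (ih fun i hi => h i (by simp [hi]))).trans
      (hv.min_le_map_add _ _)

theorem le_map_pow {x : L} {r : ℝ} (h : (r : EReal) ≤ v x) (k : ℕ) :
    ((k * r : ℝ) : EReal) ≤ v (x ^ k) := by
  induction k with
  | zero => simp [hv.map_one]
  | succ k ih =>
    rw [pow_succ, hv.map_mul, Nat.cast_succ, add_one_mul, EReal.coe_add]
    exact add_le_add ih h

theorem exists_forall_lt_coe_le (x : ℕ → L) (N : ℕ) :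
    ∃ β : ℝ, ∀ n < N, (β : EReal) ≤ v (x n) := by
  choose r hr using fun n => hv.exists_coe_le (x n)
  obtain ⟨β, hβ⟩ := ((Set.finite_Iio N).image r).bddBelow
  exact ⟨β, fun n hn => (EReal.coe_le_coe_iff.mpr (hβ ⟨n, hn, rfl⟩)).trans (hr n)⟩

theorem eventually_map_mul_pow_sub_one {π : L} (hπ : 0 < v π) (α : L) :
    ∀ᶠ n : ℕ in Filter.atTop, v (α * π ^ n - 1) = 0 := by
  obtain ⟨ε, hε, hεπ⟩ := EReal.lt_iff_exists_real_btwn.mp hπ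
  obtain ⟨r, hr⟩ := hv.exists_coe_le α
  filter_upwards [(tendsto_natCast_atTop_atTop.const_mul_atTop
    (EReal.coe_pos.mp hε)).eventually_gt_atTop (-r)] with n hn
  have hlt : v (-1) < v (α * π ^ n) := by
    calc v (-1) = ((0 : ℝ) : EReal) := by rw [hv.map_neg, hv.map_one, EReal.coe_zero]
      _ < ((r + n * ε : ℝ) : EReal) := EReal.coe_lt_coe_iff.mpr (by linarith)
      _ ≤ v (α * π ^ n) := by
        rw [hv.map_mul, EReal.coe_add]
        exact add_le_add hr (hv.le_map_pow hεπ.le n)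
  rw [sub_eq_add_neg, hv.map_add_eq_of_lt hlt, hv.map_neg, hv.map_one]

end IsEValuation

/-- The Gauss valuation `inf_n (v(fₙ) + a n)` of `f`, on the disc of radius `p^{-a}`, is `≥ β`. -/
def GaussBound (v : L → EReal) (a β : ℝ) (f : PowerSeries L) : Prop :=
  ∀ n : ℕ, ((β - a * n : ℝ) : EReal) ≤ v (coeff n f)

namespace GaussBound

variable {a β γ : ℝ} {f g : PowerSeries L}

theorem mono (h : GaussBound v a β f) (hγ : γ ≤ β) : GaussBound v a γ f := fun n =>
  (EReal.coe_le_coe_iff.mpr (by linarith)).trans (h n)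

theorem monomial (hv : IsEValuation v) {c : L} (k : ℕ)
    (hc : ((β - a * k : ℝ) : EReal) ≤ v c) : GaussBound v a β (monomial k c) := by
  intro n
  rw [coeff_monomial]
  split_ifs with h
  · exact h ▸ hc
  · simp [hv.map_zero]

theorem add (hv : IsEValuation v) (hf : GaussBound v a β f) (hg : GaussBound v a β g) :
    GaussBound v a β (f + g) := fun n => by
  rw [map_add]
  exact (le_min (hf n) (hg n)).trans (hv.min_le_map_add _ _)

theorem sub (hv : IsEValuation v) (hf : GaussBound v a β f) (hg : GaussBound v a β g) :
    GaussBound v a β (f - g) := fun n => by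
  rw [map_sub]
  exact (le_min (hf n) (hg n)).trans (hv.min_le_map_sub _ _)

theorem C_mul (hv : IsEValuation v) {c : L} {r : ℝ} (hc : (r : EReal) ≤ v c)
    (hf : GaussBound v a β f) : GaussBound v a (r + β) (C c * f) := fun n => by
  rw [coeff_C_mul, hv.map_mul, add_sub_assoc, EReal.coe_add]
  exact add_le_add hc (hf n)

theorem mul (hv : IsEValuation v) (hf : GaussBound v a β f) (hg : GaussBound v a γ g) :
    GaussBound v a (β + γ) (f * g) := fun n => by
  rw [coeff_mul]
  refine hv.le_map_sum _ _ fun p hp => ?_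
  rw [Finset.HasAntidiagonal.mem_antidiagonal] at hp
  have hn : (n : ℝ) = p.1 + p.2 := by exact_mod_cast hp.symm
  rw [hv.map_mul, hn, show β + γ - a * (p.1 + p.2) = (β - a * p.1) + (γ - a * p.2) by ring,
    EReal.coe_add]
  exact add_le_add (hf _) (hg _)

theorem pow (hv : IsEValuation v) (hf : GaussBound v a β f) (m : ℕ) :
    GaussBound v a (m * β) (f ^ m) := by
  induction m with
  | zero =>
    intro n
    rw [pow_zero, coeff_one]
    split_ifs with h
    · simp [h, hv.map_one]
    · simp [hv.map_zero]
  | succ m ih =>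
    rw [pow_succ, Nat.cast_succ, add_one_mul]
    exact ih.mul hv hf

end GaussBound

theorem rplusMem_iff (hv : IsEValuation v) {f : PowerSeries L} :
    RplusMem v f ↔ ∀ t > 0, ∃ β, GaussBound v t β f := by
  constructor
  · intro hf t ht
    obtain ⟨N, hN⟩ := hf t ht 0
    obtain ⟨β, hβ⟩ := hv.exists_forall_lt_coe_le (fun n => coeff n f) N
    refine ⟨min β 0, fun n => ?_⟩
    rcases lt_or_ge n N with hn | hn
    · refine (EReal.coe_le_coe_iff.mpr ?_).trans (hβ n hn)
      nlinarith [min_le_left β 0, n.cast_nonneg (α := ℝ)]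
    · have h0 : ((0 - t * n : ℝ) : EReal) ≤ v (coeff n f) := by
        rw [EReal.coe_sub, EReal.sub_le_iff_le_add (.inl (EReal.coe_ne_bot _))
          (.inl (EReal.coe_ne_top _)), mul_comm]
        exact_mod_cast hN n hn
      exact (EReal.coe_le_coe_iff.mpr (by linarith [min_le_right β 0])).trans h0
  · intro hf t ht M
    obtain ⟨β, hβ⟩ := hf (t / 2) (half_pos ht)
    refine ⟨⌈2 * (M - β) / t⌉₊, fun n hn => ?_⟩
    have hMn : M ≤ (β - t / 2 * n) + n * t := by
      have hNn := Nat.ceil_le.mp hn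
      rw [div_le_iff₀ ht] at hNn
      linarith
    calc (M : EReal) ≤ ((β - t / 2 * n + n * t : ℝ) : EReal) := EReal.coe_le_coe_iff.mpr hMn
      _ ≤ _ := by rw [EReal.coe_add]; exact add_le_add (hβ n) le_rfl

theorem GaussBound.le_map_sum_coeff_mul_coeff_pow (hv : IsEValuation v)
    {a β γ : ℝ} {f s : PowerSeries L} (hs : GaussBound v a γ s) {S : Finset ℕ} (n : ℕ)
    (hf : ∀ m ∈ S, ((β - γ * m : ℝ) : EReal) ≤ v (coeff m f)) :
    ((β - a * n : ℝ) : EReal) ≤ v (∑ m ∈ S, coeff m f * coeff n (s ^ m)) := by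
  refine hv.le_map_sum _ _ fun m hm => ?_
  rw [hv.map_mul, show β - a * n = (β - γ * m) + (m * γ - a * n) by ring, EReal.coe_add]
  exact add_le_add (hf m hm) (hs.pow hv m n)

theorem GaussBound.pscomp (hv : IsEValuation v) {a β γ : ℝ}
    {f s : PowerSeries L} (hf : GaussBound v γ β f) (hs : GaussBound v a γ s) :
    GaussBound v a β (pscomp f s) := fun n => by
  rw [_root_.pscomp, coeff_mk]
  exact hs.le_map_sum_coeff_mul_coeff_pow hv n fun m _ => hf m

noncomputable def lubinTatePoly (q : ℕ) (π : L) : PowerSeries L := X ^ q + C π * X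

theorem gaussBound_lubinTatePoly (hv : IsEValuation v) {q : ℕ} {π : L}
    {a b : ℝ} (hbq : b ≤ ((q : ℝ) - 1) * a) (hπ : (b : EReal) ≤ v π) :
    GaussBound v a (a + b) (lubinTatePoly q π) := by
  rw [lubinTatePoly, X_pow_eq, X_eq, ← monomial_zero_eq_C_apply, monomial_mul_monomial,
    zero_add, mul_one]
  refine (GaussBound.monomial hv q ?_).add hv (GaussBound.monomial hv 1 ?_)
  · rw [hv.map_one, ← EReal.coe_zero, EReal.coe_le_coe_iff]
    linarith
  · simpa using hπ

theorem coeff_phiqPS (q : ℕ) (π : L) (f : PowerSeries L) (n : ℕ) :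
    coeff n (phiqPS q π f) =
      ∑ m ∈ Finset.range (n + 1), coeff m f * coeff n (lubinTatePoly q π ^ m) := by
  rw [phiqPS, pscomp, coeff_mk, lubinTatePoly]

theorem coeff_lubinTatePoly_pow_self {q : ℕ} (hq : 2 ≤ q) (π : L) (n : ℕ) :
    coeff n (lubinTatePoly q π ^ n) = π ^ n := by
  have hfac : lubinTatePoly q π = X * (X ^ (q - 1) + C π) := by
    rw [lubinTatePoly, mul_add, ← pow_succ', Nat.sub_add_cancel (by omega), mul_comm X]
  rw [hfac, mul_pow]
  nth_rw 1 [← zero_add n]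
  rw [coeff_X_pow_mul, coeff_zero_eq_constantCoeff_apply, map_pow, map_add, constantCoeff_C,
    map_pow, constantCoeff_X, zero_pow (by omega), zero_add]

noncomputable def alphaPhiqSubOne (q : ℕ) (π α : L) (f : PowerSeries L) : PowerSeries L :=
  C α * phiqPS q π f - f

theorem coeff_alphaPhiqSubOne {q : ℕ} (hq : 2 ≤ q) (π α : L) (f : PowerSeries L) (n : ℕ) :
    coeff n (alphaPhiqSubOne q π α f) = (α * π ^ n - 1) * coeff n f +
      α * ∑ m ∈ Finset.range n, coeff m f * coeff n (lubinTatePoly q π ^ m) := by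
  rw [alphaPhiqSubOne, map_sub, coeff_C_mul, coeff_phiqPS, Finset.sum_range_succ,
    coeff_lubinTatePoly_pow_self hq]
  ring

theorem alphaPhiqSubOne_injective {q : ℕ} (hq : 2 ≤ q) {π α : L}
    (hα : ∀ i : ℕ, α * π ^ i ≠ 1) : Function.Injective (alphaPhiqSubOne q π α) := by
  intro f₁ f₂ h
  ext n
  induction n using Nat.strong_induction_on with
  | _ n ih =>
    have hn := congrArg (coeff n) h
    rw [coeff_alphaPhiqSubOne hq, coeff_alphaPhiqSubOne hq,
      Finset.sum_congr rfl fun m hm => by rw [ih m (Finset.mem_range.mp hm)]] at hn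
    exact mul_left_cancel₀ (sub_ne_zero.mpr (hα n)) (add_right_cancel hn)

noncomputable def alphaPhiqSubOneInvCoeff (q : ℕ) (π α : L) (g : PowerSeries L) (n : ℕ) : L :=
  (α * π ^ n - 1)⁻¹ * (coeff n g - α * ∑ m : Fin n,
    alphaPhiqSubOneInvCoeff q π α g m * coeff n (lubinTatePoly q π ^ (m : ℕ)))

theorem alphaPhiqSubOne_surjective {q : ℕ} (hq : 2 ≤ q) {π α : L}
    (hα : ∀ i : ℕ, α * π ^ i ≠ 1) : Function.Surjective (alphaPhiqSubOne q π α) := by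
  intro g
  refine ⟨mk (alphaPhiqSubOneInvCoeff q π α g), ?_⟩
  ext n
  rw [coeff_alphaPhiqSubOne hq, coeff_mk, alphaPhiqSubOneInvCoeff, ← mul_assoc,
    mul_inv_cancel₀ (sub_ne_zero.mpr (hα n)), one_mul, ← Fin.sum_univ_eq_sum_range]
  simp

theorem rplusMem_alphaPhiqSubOne (hv : IsEValuation v) {q : ℕ} (hq : 1 ≤ q)
    {π : L} (hπ : 0 ≤ v π) (α : L) {f : PowerSeries L} (hf : RplusMem v f) :
    RplusMem v (alphaPhiqSubOne q π α f) := by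
  rw [rplusMem_iff hv] at hf ⊢
  intro t ht
  obtain ⟨β, hβ⟩ := hf t ht
  obtain ⟨r, hr⟩ := hv.exists_coe_le α
  have hs : GaussBound v t t (lubinTatePoly q π) := by
    simpa using gaussBound_lubinTatePoly hv (a := t) (b := 0)
      (mul_nonneg (by simpa using hq) ht.le) (by simpa using hπ)
  have hφ : GaussBound v t (r + β) (C α * phiqPS q π f) := (hβ.pscomp hv hs).C_mul hv hr
  exact ⟨min (r + β) β, (hφ.mono (min_le_left _ _)).sub hv (hβ.mono (min_le_right _ _))⟩

theorem GaussBound.of_alphaPhiqSubOne (hv : IsEValuation v) {q : ℕ} (hq : 2 ≤ q)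
    {π α : L} (hπ : 0 < v π) {t βg : ℝ} (ht : 0 < t) {f : PowerSeries L}
    (hg : GaussBound v t βg (alphaPhiqSubOne q π α f)) : ∃ β, GaussBound v t β f := by
  obtain ⟨ε, hε, hεπ⟩ := EReal.lt_iff_exists_real_btwn.mp hπ
  set b := min (t / 2) ε
  have hb : 0 < b := lt_min (half_pos ht) (EReal.coe_pos.mp hε)
  have hs : GaussBound v (t - b) t (lubinTatePoly q π) := by
    have hq' : (1 : ℝ) ≤ q - 1 := by
      have : (2 : ℝ) ≤ q := by exact_mod_cast hq
      linarith
    have hbπ : (b : EReal) ≤ v π := (EReal.coe_le_coe_iff.mpr (min_le_right _ _)).trans hεπ.le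
    simpa using gaussBound_lubinTatePoly hv (a := t - b)
      (by nlinarith [min_le_left (t / 2) ε] : b ≤ ((q : ℝ) - 1) * (t - b)) hbπ
  obtain ⟨r, hr⟩ := hv.exists_coe_le α
  obtain ⟨N, hN⟩ := Filter.eventually_atTop.mp ((hv.eventually_map_mul_pow_sub_one hπ α).and
    ((tendsto_natCast_atTop_atTop.const_mul_atTop hb).eventually_ge_atTop (-r)))
  obtain ⟨β₀, hβ₀⟩ := hv.exists_forall_lt_coe_le (fun n => coeff n f) N
  set β := min β₀ βg
  refine ⟨β, fun n => ?_⟩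
  induction n using Nat.strong_induction_on with
  | _ n ih =>
  rcases lt_or_ge n N with hn | hn
  · refine (EReal.coe_le_coe_iff.mpr ?_).trans (hβ₀ n hn)
    nlinarith [min_le_left β₀ βg, n.cast_nonneg (α := ℝ)]
  obtain ⟨hunit, hgain⟩ := hN n hn
  set S := ∑ m ∈ Finset.range n, coeff m f * coeff n (lubinTatePoly q π ^ m)
  have hS : ((β - (t - b) * n : ℝ) : EReal) ≤ v S :=
    hs.le_map_sum_coeff_mul_coeff_pow hv n fun m hm => ih m (Finset.mem_range.mp hm)
  have hαS : ((β - t * n : ℝ) : EReal) ≤ v (α * S) := by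
    rw [hv.map_mul]
    calc _ ≤ ((r + (β - (t - b) * n) : ℝ) : EReal) := EReal.coe_le_coe_iff.mpr (by linarith)
      _ ≤ _ := by rw [EReal.coe_add]; exact add_le_add hr hS
  have hrec : (α * π ^ n - 1) * coeff n f = coeff n (alphaPhiqSubOne q π α f) - α * S := by
    rw [coeff_alphaPhiqSubOne hq]; ring
  calc _ ≤ min (v (coeff n (alphaPhiqSubOne q π α f))) (v (α * S)) :=
        le_min ((hg.mono (min_le_right _ _)) n) hαS
    _ ≤ v ((α * π ^ n - 1) * coeff n f) := hrec ▸ hv.min_le_map_sub _ _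
    _ = v (coeff n f) := by rw [hv.map_mul, hunit, zero_add]

theorem rplusMem_of_rplusMem_alphaPhiqSubOne (hv : IsEValuation v) {q : ℕ}
    (hq : 2 ≤ q) {π α : L} (hπ : 0 < v π) {f : PowerSeries L}
    (h : RplusMem v (alphaPhiqSubOne q π α f)) : RplusMem v f := by
  rw [rplusMem_iff hv] at h ⊢
  intro t ht
  obtain ⟨βg, hg⟩ := h t ht
  exact hg.of_alphaPhiqSubOne hv hq hπ ht

end

theorem stmt_10_general
    (L : Type*) [Field L]
    (v : L → EReal)
    (hv0 : v 0 = ⊤) (hv1 : v 1 = 0)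
    (hvmul : ∀ x y : L, v (x * y) = v x + v y)
    (hvadd : ∀ x y : L, min (v x) (v y) ≤ v (x + y))
    (π : L) (q e : ℕ) (hq : 2 ≤ q) (he : 0 < e)
    (hπ : v π = ((1 / (e : ℝ) : ℝ) : EReal))
    (α : L) (hα : ∀ i : ℕ, α * π ^ i ≠ 1) :
    Set.BijOn (fun f : PowerSeries L => PowerSeries.C α * phiqPS q π f - f)
      {f : PowerSeries L | RplusMem v f} {f : PowerSeries L | RplusMem v f} := by
  have hv : IsEValuation v := ⟨hv0, hv1, hvmul, hvadd⟩
  have hπ_pos : 0 < v π := by rw [hπ]; exact_mod_cast (by positivity : (0 : ℝ) < 1 / e)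
  refine ⟨fun f hf => rplusMem_alphaPhiqSubOne hv (by omega) hπ_pos.le α hf,
    (alphaPhiqSubOne_injective hq hα).injOn, fun g hg => ?_⟩
  obtain ⟨f, rfl⟩ := alphaPhiqSubOne_surjective hq hα g
  exact ⟨f, rplusMem_of_rplusMem_alphaPhiqSubOne hv hq hπ_pos hg, rfl⟩

/-- Let `L` be a field with valuation `v` (containing `F`; `v π = 1/e`, `q` the
residue cardinality).  If `α ∈ L^×` is not of the form `π^{-i}` for any `i ∈ ℕ` (equivalently
`α π^i ≠ 1` for all `i`), then `f ↦ α φ_q(f) - f` is a bijection of `R^+_L` onto itself. -/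
theorem stmt_10
    (L : Type*) [Field L]
    (v : L → EReal)
    (hv0 : v 0 = ⊤) (hv1 : v 1 = 0)
    (hvmul : ∀ x y : L, v (x * y) = v x + v y)
    (hvadd : ∀ x y : L, min (v x) (v y) ≤ v (x + y))
    (π : L) (q e : ℕ) (hq : 2 ≤ q) (he : 0 < e)
    (hπ : v π = ((1 / (e : ℝ) : ℝ) : EReal))
    (α : L) (hα0 : α ≠ 0) (hα : ∀ i : ℕ, α * π ^ i ≠ 1) :
    Set.BijOn (fun f : PowerSeries L => PowerSeries.C α * phiqPS q π f - f)
      {f : PowerSeries L | RplusMem v f} {f : PowerSeries L | RplusMem v f} :=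
  stmt_10_general L v hv0 hv1 hvmul hvadd π q e hq he hπ α hα
end

section
/- Let a ∈ O_F and let [a] ∈ O_F[[X]] be any power series with [a](X) ≡ aX mod X² and [a]([π](X)) = [π]([a](X)). Then g([a](X)) = a·g(X) in F[[X]] (i.e. σ_a(t) = a·t for the Lubin–Tate period t = g(u)). Consequently, if a ∈ O_F^×, then for every field extension L of F and every f ∈ L[[u]], ∂(f([a](u))) = a·(∂f)([a](u)), i.e. ∂∘σ_a = a·σ_a∘∂ where σ_a(f) := f∘[a]. -/
/-- The formal derivative `d/du` of a power series. -/
noncomputable def psD {L : Type*} [CommRing L] (f : PowerSeries L) : PowerSeries L :=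
  PowerSeries.mk fun n => ((n + 1 : ℕ) : L) * PowerSeries.coeff (n + 1) f

/-!
Put `h = g ∘ [a] - a g`. Since `[a]` commutes with `P = [π]` and `g ∘ P = π g`, also
`h ∘ P = π h`. If `h_n` is the first possibly nonzero coefficient, comparing coefficients of `X^n`
gives `h_n π^n = π h_n`, and `π^n ≠ π` for `n ≥ 2` because `v (π^n) = n / e`; as `h ≡ 0 mod X²`,
this forces `h = 0`. The second claim is the chain rule applied to `g ∘ [a] = a g`: from
`(g' ∘ [a]) [a]' = a g'` we get `(g')⁻¹ [a]' = a (g' ∘ [a])⁻¹ = a ((g')⁻¹ ∘ [a])`.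
-/

open PowerSeries

section
variable {R : Type*} [CommRing R]

theorem PowerSeries.coeff_pow_eq_zero_of_lt {s : R⟦X⟧} (hs : constantCoeff s = 0) {n m : ℕ}
    (h : n < m) : coeff n (s ^ m) = 0 :=
  X_pow_dvd_iff.mp (pow_dvd_pow_of_dvd (X_dvd_iff.mpr hs) m) n h

theorem PowerSeries.coeff_pow_self {s : R⟦X⟧} (hs : constantCoeff s = 0) (n : ℕ) :
    coeff n (s ^ n) = coeff 1 s ^ n := by
  obtain ⟨t, rfl⟩ := X_dvd_iff.mpr hs
  rw [mul_pow, coeff_X_pow_mul', if_pos le_rfl, Nat.sub_self, coeff_zero_eq_constantCoeff,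
    map_pow, coeff_succ_X_mul, coeff_zero_eq_constantCoeff]

theorem pscomp_eq_subst (f : R⟦X⟧) {s : R⟦X⟧} (hs : constantCoeff s = 0) :
    pscomp f s = f.subst s := by
  ext n
  rw [coeff_subst' (HasSubst.of_constantCoeff_zero' hs),
    finsum_eq_sum_of_support_subset (s := Finset.range (n + 1))]
  · simp [pscomp, smul_eq_mul]
  · intro d hd
    by_contra hdn
    simp only [Finset.coe_range, Set.mem_Iio, not_lt] at hdn
    exact hd (by simp only [coeff_pow_eq_zero_of_lt hs (by omega : n < d), smul_zero])

theorem psD_eq_derivative (f : R⟦X⟧) : psD f = d⁄dX R f := by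
  ext n
  simp [psD, coeff_derivative, mul_comm]

theorem PowerSeries.coeff_subst_of_forall_lt_eq_zero {h P : R⟦X⟧} (hP : constantCoeff P = 0)
    {n : ℕ} (hlt : ∀ m < n, coeff m h = 0) :
    coeff n (h.subst P) = coeff n h * coeff 1 P ^ n := by
  rw [coeff_subst' (HasSubst.of_constantCoeff_zero' hP), finsum_eq_single _ n, smul_eq_mul,
    coeff_pow_self hP]
  intro d hd
  rcases hd.lt_or_gt with hd | hd
  · rw [hlt d hd, zero_smul]
  · rw [coeff_pow_eq_zero_of_lt hP hd, smul_zero]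

theorem PowerSeries.constantCoeff_subst_of_constantCoeff_eq_zero {s : R⟦X⟧}
    (hs : constantCoeff s = 0) (f : R⟦X⟧) : constantCoeff (f.subst s) = constantCoeff f := by
  simpa using coeff_subst_of_forall_lt_eq_zero (h := f) hs (n := 0) (by simp)

theorem PowerSeries.eq_zero_of_subst_eq_C_mul [IsDomain R] {h P : R⟦X⟧}
    (hP : constantCoeff P = 0) (hP1 : ∀ n, 2 ≤ n → coeff 1 P ^ n ≠ coeff 1 P)
    (h0 : coeff 0 h = 0) (h1 : coeff 1 h = 0) (hh : h.subst P = C (coeff 1 P) * h) : h = 0 := by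
  ext n
  induction n using Nat.strong_induction_on with
  | _ n ih =>
    match n, ih with
    | 0, _ => simpa using h0
    | 1, _ => simpa using h1
    | n + 2, ih =>
      have hn := congrArg (coeff (n + 2)) hh
      rw [coeff_subst_of_forall_lt_eq_zero hP (fun m hm => by simpa using ih m hm),
        coeff_C_mul, mul_comm (coeff 1 P)] at hn
      rw [map_zero]
      by_contra hne
      exact hP1 (n + 2) (by omega) (mul_left_cancel₀ hne hn)

theorem PowerSeries.subst_C_mul {t : R⟦X⟧} (ht : HasSubst t) (b : R) (f : R⟦X⟧) :
    (C b * f).subst t = C b * f.subst t := by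
  rw [← smul_eq_C_mul, subst_smul ht, smul_eq_C_mul]

theorem PowerSeries.subst_sub_C_mul_subst_eq {g s P : R⟦X⟧} {a c : R}
    (hs : constantCoeff s = 0) (hP : constantCoeff P = 0)
    (hgP : g.subst P = C c * g) (hsP : s.subst P = P.subst s) :
    subst P (g.subst s - C a * g) = C c * (g.subst s - C a * g) := by
  have hs' := HasSubst.of_constantCoeff_zero' hs
  have hP' := HasSubst.of_constantCoeff_zero' hP
  rw [subst_sub hP', subst_C_mul hP', subst_comp_subst_apply hs' hP', hsP,
    ← subst_comp_subst_apply hP' hs', hgP, subst_C_mul hs']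
  ring

theorem PowerSeries.subst_eq_C_mul_of_subst_comm [IsDomain R] {g s P : R⟦X⟧}
    (hs : constantCoeff s = 0) (hP : constantCoeff P = 0)
    (hP1 : ∀ n, 2 ≤ n → coeff 1 P ^ n ≠ coeff 1 P)
    (hg0 : coeff 0 g = 0) (hg1 : coeff 1 g = 1)
    (hgP : g.subst P = C (coeff 1 P) * g) (hsP : s.subst P = P.subst s) :
    g.subst s = C (coeff 1 s) * g := by
  have hlow : ∀ m < 1, coeff m g = 0 := by
    intro m hm; rwa [Nat.lt_one_iff.mp hm]
  refine sub_eq_zero.mp (eq_zero_of_subst_eq_C_mul hP hP1 ?_ ?_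
    (subst_sub_C_mul_subst_eq hs hP hgP hsP))
  · rw [map_sub, coeff_subst_of_forall_lt_eq_zero hs (by simp), coeff_C_mul, hg0]; ring
  · rw [map_sub, coeff_subst_of_forall_lt_eq_zero hs hlow, coeff_C_mul, hg1]; ring

end

section
variable {K : Type*} [Field K]

theorem PowerSeries.subst_inv {f s : K⟦X⟧} (hs : constantCoeff s = 0)
    (hf : constantCoeff f ≠ 0) : f⁻¹.subst s = (f.subst s)⁻¹ := by
  have hs' := HasSubst.of_constantCoeff_zero' hs
  have hfs : constantCoeff (f.subst s) ≠ 0 := by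
    rwa [constantCoeff_subst_of_constantCoeff_eq_zero hs]
  rw [eq_inv_iff_mul_eq_one hfs, ← subst_mul hs', PowerSeries.inv_mul_cancel f hf,
    ← coe_substAlgHom hs', map_one]

theorem PowerSeries.inv_derivative_mul_derivative_subst {g s : K⟦X⟧} {a : K}
    (hs : constantCoeff s = 0) (hg : constantCoeff (d⁄dX K g) ≠ 0)
    (hgs : g.subst s = C a * g) (f : K⟦X⟧) :
    (d⁄dX K g)⁻¹ * d⁄dX K (f.subst s) = C a * subst s ((d⁄dX K g)⁻¹ * d⁄dX K f) := by
  have hs' := HasSubst.of_constantCoeff_zero' hs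
  set D := d⁄dX K g
  have hchain : D.subst s * d⁄dX K s = C a * D := by
    rw [← derivative_subst hs', hgs, ← smul_eq_C_mul, Derivation.map_smul, smul_eq_C_mul]
  have hE : constantCoeff (D.subst s) ≠ 0 := by
    rwa [constantCoeff_subst_of_constantCoeff_eq_zero hs]
  rw [subst_mul hs', subst_inv hs hg, derivative_subst hs']
  linear_combination ((D.subst s)⁻¹ * D⁻¹ * (d⁄dX K f).subst s) * hchain
    + (C a * (D.subst s)⁻¹ * (d⁄dX K f).subst s) * PowerSeries.inv_mul_cancel D hg
    - (D⁻¹ * (d⁄dX K f).subst s * d⁄dX K s) * PowerSeries.inv_mul_cancel _ hE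

end

theorem pow_ne_self_of_map_eq_coe {M : Type*} [Monoid M] (v : M → EReal)
    (hvmul : ∀ x y, v (x * y) = v x + v y) {π : M} {r : ℝ} (hπ : v π = r) (hr : r ≠ 0)
    {n : ℕ} (hn : 2 ≤ n) : π ^ n ≠ π := by
  have hpow : ∀ m : ℕ, v (π ^ (m + 1)) = (((m + 1 : ℕ) : ℝ) * r : ℝ) := by
    intro m
    induction m with
    | zero => simpa using hπ
    | succ m ih =>
      rw [pow_succ, hvmul, ih, hπ, ← EReal.coe_add]
      congr 1
      push_cast
      ring
  obtain ⟨m, rfl⟩ : ∃ m, n = m + 1 := ⟨n - 1, by omega⟩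
  intro h
  have hm := hpow m
  rw [h, hπ, EReal.coe_eq_coe_iff] at hm
  have : (m : ℝ) * r = 0 := by push_cast at hm; linarith
  rcases mul_eq_zero.mp this with h0 | h0
  · norm_cast at h0; omega
  · exact hr h0

theorem stmt_14_general
    (L : Type*) [Field L]
    (v : L → EReal)
    (hvmul : ∀ x y : L, v (x * y) = v x + v y)
    (π : L) (q e : ℕ) (hq : 2 ≤ q) (he : 0 < e)
    (hπ : v π = ((1 / (e : ℝ) : ℝ) : EReal))
    (gs : PowerSeries L)
    (hg0 : PowerSeries.coeff 0 gs = 0) (hg1 : PowerSeries.coeff 1 gs = 1)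
    (hgeq : pscomp gs (PowerSeries.X ^ q + PowerSeries.C π * PowerSeries.X)
      = PowerSeries.C π * gs)
    (a : L)
    (sa : PowerSeries L)
    (hsa0 : PowerSeries.coeff 0 sa = 0) (hsa1 : PowerSeries.coeff 1 sa = a)
    (hsacomm : pscomp sa (PowerSeries.X ^ q + PowerSeries.C π * PowerSeries.X)
      = sa ^ q + PowerSeries.C π * sa) :
    pscomp gs sa = PowerSeries.C a * gs ∧
    (v a = 0 → ∀ f : PowerSeries L,
      (psD gs)⁻¹ * psD (pscomp f sa)
        = PowerSeries.C a * pscomp ((psD gs)⁻¹ * psD f) sa) := by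
  set P : L⟦X⟧ := X ^ q + C π * X with hP
  have hP0 : constantCoeff P = 0 := by simp [hP, zero_pow (by omega : q ≠ 0)]
  have hP1 : coeff 1 P = π := by simp [hP, coeff_X_pow, show 1 ≠ q by omega]
  have hsa0' : constantCoeff sa = 0 := by rwa [← coeff_zero_eq_constantCoeff_apply]
  have hsa' := HasSubst.of_constantCoeff_zero' hsa0'
  have hsaP : sa.subst P = P.subst sa := by
    rw [← pscomp_eq_subst _ hP0, hsacomm, hP, subst_add hsa', subst_pow hsa', subst_X hsa',
      subst_C_mul hsa', subst_X hsa']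
  have hgP : gs.subst P = C (coeff 1 P) * gs := by rw [hP1, ← pscomp_eq_subst _ hP0, hgeq]
  have hπpow : ∀ n, 2 ≤ n → coeff 1 P ^ n ≠ coeff 1 P := fun n hn => by
    rw [hP1]; exact pow_ne_self_of_map_eq_coe v hvmul hπ (by positivity) hn
  have hlog : gs.subst sa = C a * gs :=
    hsa1 ▸ subst_eq_C_mul_of_subst_comm hsa0' hP0 hπpow hg0 hg1 hgP hsaP
  have hD : constantCoeff (d⁄dX L gs) ≠ 0 := by
    simp [← coeff_zero_eq_constantCoeff_apply, coeff_derivative, hg1]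
  refine ⟨by rw [pscomp_eq_subst _ hsa0', hlog], fun _ f => ?_⟩
  simp only [psD_eq_derivative, pscomp_eq_subst _ hsa0']
  exact inv_derivative_mul_derivative_subst hsa0' hD hlog f

/-- Let `a ∈ O_F` and let `[a]` (here `sa`) be any power series in `O_F[[X]]` with
`[a](X) ≡ aX mod X²` and `[a]([π](X)) = [π]([a](X))`, where `[π](X) = X^q + π X`.  Let `g` be
the Lubin–Tate logarithm (`g ≡ X mod X²`, `g([π]X) = π g(X)`).  Then `g([a](X)) = a · g(X)`.
Consequently, if `a ∈ O_F^×` (i.e. `v a = 0`), then for every `f ∈ L[[u]]`,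
`∂(f ∘ [a]) = a · (∂ f) ∘ [a]`, where `∂ = (g')⁻¹ d/du`. -/
theorem stmt_14
    (L : Type*) [Field L]
    (v : L → EReal)
    (hv0 : v 0 = ⊤) (hv1 : v 1 = 0)
    (hvmul : ∀ x y : L, v (x * y) = v x + v y)
    (hvadd : ∀ x y : L, min (v x) (v y) ≤ v (x + y))
    (π : L) (q e : ℕ) (hq : 2 ≤ q) (he : 0 < e)
    (hπ : v π = ((1 / (e : ℝ) : ℝ) : EReal))
    (gs : PowerSeries L)
    (hg0 : PowerSeries.coeff 0 gs = 0) (hg1 : PowerSeries.coeff 1 gs = 1)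
    (hgeq : pscomp gs (PowerSeries.X ^ q + PowerSeries.C π * PowerSeries.X)
      = PowerSeries.C π * gs)
    (a : L) (ha : (0 : EReal) ≤ v a)
    (sa : PowerSeries L)
    (hsa0 : PowerSeries.coeff 0 sa = 0) (hsa1 : PowerSeries.coeff 1 sa = a)
    (hsaO : ∀ n : ℕ, (0 : EReal) ≤ v (PowerSeries.coeff n sa))
    (hsacomm : pscomp sa (PowerSeries.X ^ q + PowerSeries.C π * PowerSeries.X)
      = sa ^ q + PowerSeries.C π * sa) :
    pscomp gs sa = PowerSeries.C a * gs ∧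
    (v a = 0 → ∀ f : PowerSeries L,
      (psD gs)⁻¹ * psD (pscomp f sa)
        = PowerSeries.C a * pscomp ((psD gs)⁻¹ * psD f) sa) :=
  stmt_14_general L v hvmul π q e hq he hπ gs hg0 hg1 hgeq a sa hsa0 hsa1 hsacomm
end
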